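/- arXiv:1405.4025 — 2 statements merged into one kernel-verified Lean document; each statement's English description precedes it below -/
import Mathlib

section
/- Let R be the ring of integers of ℚ(√d) with d < 0 squarefree, written R = ℤ + ℤω. Let n = a + bω ∈ R with N(n) = |n|² odd, |n| ≠ 1, and gcd(b, N(n)) = 1. Then for every x ∈ R there exist q ∈ R and r ∈ ℤ with |r| ≤ (N(n)-1)/2 such that x = nq + r. -/
/-!
Realise `ℤ[ω]` as `QuadraticAlgebra ℤ e f` (with `ω² = e + f ω`) mapping into `ℂ`, so that `N` is
the norm `n * star n`. In the quotient by `(n)` the integer `N` vanishes, so `b`, being coprime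
to `N`, becomes invertible, and `a + b ω = 0` gives `ω ≡ -a b⁻¹`. Hence every class modulo `n`
contains a rational integer, which may be replaced by its balanced residue modulo the odd
number `N`.
-/

open Complex ComplexConjugate

theorem Int.exists_two_mul_abs_le_modEq_of_odd {N : ℤ} (hN0 : 0 ≤ N) (hN : Odd N) (m : ℤ) :
    ∃ r : ℤ, 2 * |r| ≤ N - 1 ∧ r ≡ m [ZMOD N] := by
  lift N to ℕ using hN0
  obtain ⟨k, hk⟩ := hN
  have hpos : 0 < N := by omega
  refine ⟨m.bmod N, ?_, Int.bmod_emod⟩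
  have := Int.le_bmod (x := m) hpos
  have := Int.bmod_lt (x := m) hpos
  cases abs_cases (m.bmod N) <;> omega

namespace QuadraticAlgebra

variable {e f : ℤ}

theorem intCast_norm_eq_zero_mod_span_singleton (z : QuadraticAlgebra ℤ e f) :
    (z.norm : QuadraticAlgebra ℤ e f ⧸ Ideal.span {z}) = 0 := by
  rw [← map_intCast (Ideal.Quotient.mk (Ideal.span {z})), Ideal.Quotient.eq_zero_iff_mem,
    ← eq_intCast (algebraMap ℤ (QuadraticAlgebra ℤ e f)), algebraMap_norm_eq_mul_star]
  exact Ideal.mul_mem_right _ _ (Ideal.mem_span_singleton_self z)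

theorem intCast_surjective_quotient_span_singleton {z : QuadraticAlgebra ℤ e f}
    (hz : IsCoprime z.im z.norm) :
    Function.Surjective (Int.castRingHom (QuadraticAlgebra ℤ e f ⧸ Ideal.span {z})) := by
  set π := Ideal.Quotient.mk (Ideal.span {z})
  have hπ (x y : ℤ) : π ⟨x, y⟩ = x + y * π omega := by
    simp [mk_eq_add_smul_omega, zsmul_eq_mul]
  have hz0 : (z.re : QuadraticAlgebra ℤ e f ⧸ Ideal.span {z}) + z.im * π omega = 0 := by
    rw [← hπ, mk_eta, Ideal.Quotient.eq_zero_iff_mem]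
    exact Ideal.mem_span_singleton_self z
  obtain ⟨u, v, huv⟩ := hz
  have hu : (u : QuadraticAlgebra ℤ e f ⧸ Ideal.span {z}) * z.im = 1 := by
    have := congrArg (Int.cast : ℤ → QuadraticAlgebra ℤ e f ⧸ Ideal.span {z}) huv
    push_cast at this
    linear_combination this -
      (v : QuadraticAlgebra ℤ e f ⧸ Ideal.span {z}) * intCast_norm_eq_zero_mod_span_singleton z
  have hω : π omega = ((-u * z.re : ℤ) : QuadraticAlgebra ℤ e f ⧸ Ideal.span {z}) := by
    push_cast
    linear_combination (u : QuadraticAlgebra ℤ e f ⧸ Ideal.span {z}) * hz0 - π omega * hu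
  rintro y
  obtain ⟨⟨s, t⟩, rfl⟩ := Ideal.Quotient.mk_surjective y
  refine ⟨s + t * (-u * z.re), ?_⟩
  rw [eq_intCast, hπ, hω]
  push_cast
  ring

theorem exists_eq_mul_add_intCast_of_isCoprime {z : QuadraticAlgebra ℤ e f} (hN0 : 0 ≤ z.norm)
    (hN : Odd z.norm) (hz : IsCoprime z.im z.norm) (x : QuadraticAlgebra ℤ e f) :
    ∃ q : QuadraticAlgebra ℤ e f, ∃ r : ℤ, 2 * |r| ≤ z.norm - 1 ∧ x = z * q + r := by
  obtain ⟨m, hm⟩ := intCast_surjective_quotient_span_singleton hz (Ideal.Quotient.mk _ x)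
  obtain ⟨r, hr, hrm⟩ := Int.exists_two_mul_abs_le_modEq_of_odd hN0 hN m
  have hx : Ideal.Quotient.mk (Ideal.span {z}) x = r := by
    rw [← hm, eq_intCast, ← sub_eq_zero]
    obtain ⟨c, hc⟩ := hrm.dvd
    rw [← Int.cast_sub, hc, Int.cast_mul, intCast_norm_eq_zero_mod_span_singleton, zero_mul]
  obtain ⟨q, hq⟩ :=
    Ideal.mem_span_singleton'.mp (Ideal.Quotient.eq.mp (hx.trans (map_intCast _ r).symm))
  exact ⟨q, r, hr, by rw [mul_comm, hq, sub_add_cancel]⟩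

theorem normSq_algHom_eq_norm (φ : QuadraticAlgebra ℤ e f →ₐ[ℤ] ℂ)
    (hφ : conj (φ omega) = f - φ omega) (z : QuadraticAlgebra ℤ e f) :
    normSq (φ z) = z.norm := by
  have hω : φ omega * φ omega = e + f * φ omega := by
    rw [← map_mul, omega_mul_omega_eq_add]
    simp [zsmul_eq_mul]
  have hz : φ z = z.re + z.im * φ omega := by
    conv_lhs => rw [← mk_eta z, mk_eq_add_smul_omega]
    simp [zsmul_eq_mul]
  apply ofReal_injective
  rw [← mul_conj, hz, map_add, map_mul, hφ, norm_def]
  simp only [map_intCast, Int.cast_sub, Int.cast_add, Int.cast_mul, ofReal_sub, ofReal_add,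
    ofReal_mul, ofReal_intCast]
  linear_combination (-(z.im : ℂ) ^ 2) * hω

end QuadraticAlgebra

theorem exists_int_mul_self_eq_and_conj_eq {d : ℤ} (hd : d < 0) {ω : ℂ}
    (hω : ω = if d % 4 = 1 then (1 + Complex.I * Real.sqrt (-d : ℤ)) / 2
      else Complex.I * Real.sqrt (-d : ℤ)) :
    ∃ e f : ℤ, ω * ω = e + f * ω ∧ conj ω = f - ω := by
  have hsq : (Real.sqrt (-d : ℤ) : ℂ) ^ 2 = -d := by
    rw [← ofReal_pow, Real.sq_sqrt (by exact_mod_cast (by omega : (0 : ℤ) ≤ -d))]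
    norm_cast
  split_ifs at hω with hd4
  · have h4 : (4 : ℂ) * ((d - 1) / 4 : ℤ) = d - 1 := by
      exact_mod_cast (by omega : 4 * ((d - 1) / 4) = d - 1)
    refine ⟨(d - 1) / 4, 1, ?_, ?_⟩
    · rw [hω]
      linear_combination (-1 / 4 : ℂ) * hsq - (1 / 4 : ℂ) * h4 +
        (1 / 4 : ℂ) * (Real.sqrt (-d : ℤ) : ℂ) ^ 2 * I_sq
    · rw [hω]
      simp only [map_div₀, map_add, map_one, map_mul, conj_I, conj_ofReal, map_ofNat]
      push_cast
      ring
  · refine ⟨d, 0, ?_, ?_⟩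
    · rw [hω]
      linear_combination -hsq + (Real.sqrt (-d : ℤ) : ℂ) ^ 2 * I_sq
    · rw [hω]
      simp [conj_ofReal]

theorem division_with_integer_remainder_general (d : ℤ) (hd : d < 0)
    (ω : ℂ)
    (hω : ω = if d % 4 = 1 then (1 + Complex.I * Real.sqrt (-d : ℤ)) / 2
      else Complex.I * Real.sqrt (-d : ℤ))
    (a b : ℤ) (n : ℂ) (hn : n = (a : ℂ) + (b : ℂ) * ω)
    (N : ℤ) (hN : (N : ℝ) = Complex.normSq n)
    (hNodd : Odd N) (hcop : IsCoprime b N)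
    (x : ℂ) (hx : ∃ s t : ℤ, x = (s : ℂ) + (t : ℂ) * ω) :
    ∃ q : ℂ, (∃ s t : ℤ, q = (s : ℂ) + (t : ℂ) * ω) ∧
      ∃ r : ℤ, 2 * |r| ≤ N - 1 ∧ x = n * q + (r : ℂ) := by
  obtain ⟨s, t, rfl⟩ := hx
  obtain ⟨e, f, hωω, hconj⟩ := exists_int_mul_self_eq_and_conj_eq hd hω
  let φ : QuadraticAlgebra ℤ e f →ₐ[ℤ] ℂ := QuadraticAlgebra.lift ⟨ω, by simp [hωω, zsmul_eq_mul]⟩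
  have hφ (z : QuadraticAlgebra ℤ e f) : φ z = z.re + z.im * ω := by
    simp [φ, zsmul_eq_mul]
  have hnorm : (⟨a, b⟩ : QuadraticAlgebra ℤ e f).norm = N := by
    have := QuadraticAlgebra.normSq_algHom_eq_norm φ (by simpa [hφ] using hconj) ⟨a, b⟩
    rw [hφ, ← hn, ← hN] at this
    exact_mod_cast this.symm
  have hN0 : 0 ≤ N := by exact_mod_cast hN ▸ normSq_nonneg n
  obtain ⟨q, r, hr, hxq⟩ := QuadraticAlgebra.exists_eq_mul_add_intCast_of_isCoprime
    (hnorm ▸ hN0) (hnorm ▸ hNodd) (hnorm ▸ hcop) ⟨s, t⟩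
  refine ⟨φ q, ⟨q.re, q.im, hφ q⟩, r, hnorm ▸ hr, ?_⟩
  have := congrArg φ hxq
  rwa [map_add, map_mul, map_intCast, hφ ⟨s, t⟩, hφ ⟨a, b⟩, ← hn] at this

theorem division_with_integer_remainder (d : ℤ) (hd : d < 0) (hsf : Squarefree d)
    (ω : ℂ)
    (hω : ω = if d % 4 = 1 then (1 + Complex.I * Real.sqrt (-d : ℤ)) / 2
      else Complex.I * Real.sqrt (-d : ℤ))
    (a b : ℤ) (n : ℂ) (hn : n = (a : ℂ) + (b : ℂ) * ω)
    (N : ℤ) (hN : (N : ℝ) = Complex.normSq n)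
    (hNodd : Odd N) (hN1 : N ≠ 1) (hcop : IsCoprime b N)
    (x : ℂ) (hx : ∃ s t : ℤ, x = (s : ℂ) + (t : ℂ) * ω) :
    ∃ q : ℂ, (∃ s t : ℤ, q = (s : ℂ) + (t : ℂ) * ω) ∧
      ∃ r : ℤ, 2 * |r| ≤ N - 1 ∧ x = n * q + (r : ℂ) :=
  division_with_integer_remainder_general d hd ω hω a b n hn N hN hNodd hcop x hx
end

section
/- In any integral domain (or its fraction field): for n ∈ D and b ∈ D with b ≠ 0, nb+1 ≠ 0, and 4(nb+1) - n ≠ 0, one has 4/(4(nb+1)-n) = 1/(nb+1) + 1/((4(nb+1)-n)·b) - 1/((4(nb+1)-n)·(nb+1)·b). -/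
/-- With `m = n b + 1` and `q = 4 m - n`, the numerator over `q m b` is `q b + (m - 1) = q b + n b = 4 m b`. -/
theorem four_div_eq_add_sub_unit_fractions {K : Type*} [Field K] {n b : K} (hb : b ≠ 0)
    (h1 : n * b + 1 ≠ 0) (h2 : 4 * (n * b + 1) - n ≠ 0) :
    4 / (4 * (n * b + 1) - n) =
      1 / (n * b + 1) + 1 / ((4 * (n * b + 1) - n) * b) -
        1 / ((4 * (n * b + 1) - n) * (n * b + 1) * b) := by
  field_simp
  ring

theorem key_identity_r_one_general (D : Type*) [CommRing D]
    (K : Type*) [Field K] [Algebra D K] [IsFractionRing D K]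
    (n b : D) (hb : b ≠ 0) (h1 : n * b + 1 ≠ 0) (h2 : 4 * (n * b + 1) - n ≠ 0) :
    (4 : K) / algebraMap D K (4 * (n * b + 1) - n) =
      1 / algebraMap D K (n * b + 1) +
        1 / algebraMap D K ((4 * (n * b + 1) - n) * b) -
        1 / algebraMap D K ((4 * (n * b + 1) - n) * (n * b + 1) * b) := by
  have map_ne_zero {x : D} (hx : x ≠ 0) : algebraMap D K x ≠ 0 :=
    (map_ne_zero_iff _ (IsFractionRing.injective D K)).mpr hx
  have hb' := map_ne_zero hb
  have h1' := map_ne_zero h1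
  have h2' := map_ne_zero h2
  simp only [map_sub, map_mul, map_add, map_one, map_ofNat] at h1' h2' ⊢
  exact four_div_eq_add_sub_unit_fractions hb' h1' h2'

theorem key_identity_r_one (D : Type*) [CommRing D] [IsDomain D]
    (K : Type*) [Field K] [Algebra D K] [IsFractionRing D K]
    (n b : D) (hb : b ≠ 0) (h1 : n * b + 1 ≠ 0) (h2 : 4 * (n * b + 1) - n ≠ 0) :
    (4 : K) / algebraMap D K (4 * (n * b + 1) - n) =
      1 / algebraMap D K (n * b + 1) +
        1 / algebraMap D K ((4 * (n * b + 1) - n) * b) -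
        1 / algebraMap D K ((4 * (n * b + 1) - n) * (n * b + 1) * b) :=
  key_identity_r_one_general D K n b hb h1 h2
end
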